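/- Let f : N → M be a surjective non-contractive multi-embedding of a finite metric space M in a metric space N with path distortion at most α, and let g_1,…,g_k ⊆ M be groups. For every Steiner subgraph E in M for g_1,…,g_k whose graph is a tree (connected and acyclic on its support), there exists a Steiner subgraph E' in N for the groups f⁻¹(g_1),…,f⁻¹(g_k) with cost(E') ≤ 2α·cost(E). -/

import Mathlib

/-- A multi-embedding `f : N → M` (a surjective map) is non-contractive if
distances in `N` dominate the distances of the images in `M`. -/
def NonContractive {N M : Type*} [MetricSpace N] [MetricSpace M] (f : N → M) : Prop :=
  ∀ u v : N, dist (f u) (f v) ≤ dist u v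

/-- The length of a path (finite sequence of points) in a metric space. -/
noncomputable def pathLength {X : Type*} [MetricSpace X] (p : List X) : ℝ :=
  (List.zipWith dist p p.tail).sum

/-- A non-contractive multi-embedding `f : N → M` has path distortion at most `α`. -/
def PathDistortionLE {N M : Type*} [MetricSpace N] [MetricSpace M] (f : N → M) (α : ℝ) : Prop :=
  ∀ p : List M, ∃ p' : List N, p'.map f = p ∧ pathLength p' ≤ α * pathLength p

def edgeGraph {S : Type*} (E : Finset (Sym2 S)) : SimpleGraph S where
  Adj x y := x ≠ y ∧ s(x, y) ∈ E
  symm := ⟨fun x y h => ⟨h.1.symm, by rw [Sym2.eq_swap]; exact h.2⟩⟩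
  loopless := ⟨fun x h => h.1 rfl⟩

/-- The support of a finite set of edges: the set of endpoints of its (non-degenerate)
edges. -/
def edgeSupport {S : Type*} (E : Finset (Sym2 S)) : Set S :=
  {x | ∃ y, x ≠ y ∧ s(x, y) ∈ E}

/-- The cost of a finite set of edges in a metric space: the sum of the distances
between the endpoints of the edges. -/
noncomputable def edgeCost {S : Type*} [MetricSpace S] (E : Finset (Sym2 S)) : ℝ :=
  ∑ e ∈ E, Sym2.lift ⟨dist, fun a b => dist_comm a b⟩ e

/-- A finite edge set `E` is a Steiner subgraph for the groups `g_1,…,g_k`: its edges are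
pairs of distinct points, the simple graph on its support with edge set `E` is connected,
and its support meets every group. -/
def IsSteinerSubgraph {S : Type*} {k : ℕ} (E : Finset (Sym2 S)) (g : Fin k → Set S) : Prop :=
  (∀ e ∈ E, ¬ e.IsDiag) ∧
  (∀ x ∈ edgeSupport E, ∀ y ∈ edgeSupport E, (edgeGraph E).Reachable x y) ∧
  (∀ j, ∃ x ∈ edgeSupport E, x ∈ g j)

/-!
Walk around `E` traversing every edge twice: starting from one vertex, repeatedly take an edge
`{x, z}` of `E` leaving the visited set (connectivity provides one while a vertex is missing) and
splice the detour `x → z → x` into the walk. This yields a walk through every vertex of `E` with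
consecutive points distinct and length at most `2·cost(E)`. Lifting it by the path distortion gives
a path in `N` of length at most `2α·cost(E)` through a preimage of every vertex; its consecutive
pairs form a connected edge set meeting every `f⁻¹(g_j)`, whose cost is at most that length.
-/

lemma SimpleGraph.reachable_of_isChain_adj {V : Type*} {G : SimpleGraph V} {l : List V}
    (hl : l.IsChain G.Adj) {x y : V} (hx : x ∈ l) (hy : y ∈ l) : G.Reachable x y := by
  cases l with
  | nil => simp at hx
  | cons a t =>
    have hfrom : ∀ z ∈ a :: t, G.Reachable a z :=
      hl.induction _ _ (fun _ _ hadj hr => hr.trans hadj.reachable) fun _ => .refl a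
    exact (hfrom x hx).symm.trans (hfrom y hy)

lemma SimpleGraph.Reachable.exists_adj {V : Type*} {G : SimpleGraph V} {x y : V}
    (h : G.Reachable x y) (hxy : x ≠ y) : ∃ z, G.Adj x z := by
  obtain ⟨w⟩ := h
  obtain ⟨z, hz, -⟩ := w.exists_eq_cons_of_ne hxy
  exact ⟨z, hz⟩

section

variable {X : Type*}

section Edges

@[simp]
lemma edgeSupport_empty : edgeSupport (∅ : Finset (Sym2 X)) = ∅ := by
  ext x
  simp [edgeSupport]

lemma isSteinerSubgraph_empty_iff {k : ℕ} {g : Fin k → Set X} :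
    IsSteinerSubgraph (∅ : Finset (Sym2 X)) g ↔ IsEmpty (Fin k) := by
  simp [IsSteinerSubgraph, isEmpty_iff]

lemma edgeGraph_mono {E F : Finset (Sym2 X)} (h : E ⊆ F) : edgeGraph E ≤ edgeGraph F :=
  fun _ _ hxy => ⟨hxy.1, h hxy.2⟩

variable [MetricSpace X]

lemma lift_dist_nonneg (e : Sym2 X) : 0 ≤ Sym2.lift ⟨dist, fun a b => dist_comm a b⟩ e := by
  induction e using Sym2.ind with
  | _ a b => exact dist_nonneg

lemma edgeCost_mono {E F : Finset (Sym2 X)} (h : E ⊆ F) : edgeCost E ≤ edgeCost F :=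
  Finset.sum_le_sum_of_subset_of_nonneg h fun e _ _ => lift_dist_nonneg e

lemma edgeCost_insert [DecidableEq X] {T : Finset (Sym2 X)} {x z : X} (h : s(x, z) ∉ T) :
    edgeCost (insert s(x, z) T) = dist x z + edgeCost T := by
  rw [edgeCost, Finset.sum_insert h, Sym2.lift_mk]
  rfl

lemma edgeCost_toFinset_le [DecidableEq X] (l : List (Sym2 X)) :
    edgeCost l.toFinset ≤ (l.map (Sym2.lift ⟨dist, fun a b => dist_comm a b⟩)).sum := by
  have hdedup : l.dedup.toFinset = l.toFinset := by ext; simp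
  rw [edgeCost, ← hdedup, List.sum_toFinset _ (List.nodup_dedup l)]
  exact ((List.dedup_sublist l).map _).sum_le_sum (by simp [lift_dist_nonneg])

end Edges

section PathLength

variable [MetricSpace X]

lemma pathLength_cons_cons (a b : X) (l : List X) :
    pathLength (a :: b :: l) = dist a b + pathLength (b :: l) := by
  simp [pathLength]

lemma pathLength_detour (l₁ l₂ : List X) (x z : X) :
    pathLength (l₁ ++ x :: z :: x :: l₂) = pathLength (l₁ ++ x :: l₂) + 2 * dist x z := by
  induction l₁ with
  | nil =>
    simp only [List.nil_append, pathLength_cons_cons, dist_comm z x]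
    ring
  | cons a t ih =>
    cases t with
    | nil =>
      simp only [List.cons_append, List.nil_append, pathLength_cons_cons] at ih ⊢
      linarith
    | cons b t =>
      simp only [List.cons_append, pathLength_cons_cons] at ih ⊢
      linarith

lemma PathDistortionLE.nonneg {M : Type*} [MetricSpace M] {f : X → M} {α : ℝ}
    (h : PathDistortionLE f α) {a b : M} (hab : a ≠ b) : 0 ≤ α := by
  obtain ⟨p, hmap, hlen⟩ := h [a, b]
  rcases p with _ | ⟨u, _ | ⟨v, _ | ⟨w, t⟩⟩⟩ <;> simp only [List.map_cons, List.map_nil,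
    List.cons.injEq, reduceCtorEq, and_false] at hmap
  obtain ⟨rfl, rfl, -⟩ := hmap
  simp only [pathLength, List.tail_cons, List.zipWith_cons_cons, List.zipWith_nil_right,
    List.sum_cons, List.sum_nil, add_zero] at hlen
  nlinarith [dist_nonneg (x := u) (y := v), dist_pos.2 hab]

end PathLength

section Tour

variable [MetricSpace X]

def IsDoubleTour (T : Finset (Sym2 X)) (p : List X) : Prop :=
  p.IsChain (· ≠ ·) ∧ (∀ x ∈ edgeSupport T, x ∈ p) ∧ pathLength p ≤ 2 * edgeCost T

lemma isDoubleTour_empty (r : X) : IsDoubleTour ∅ [r] :=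
  ⟨List.isChain_singleton r, by simp, by simp [pathLength, edgeCost]⟩

lemma IsDoubleTour.notMem {T : Finset (Sym2 X)} {p : List X} (hp : IsDoubleTour T p) {x z : X}
    (hxz : x ≠ z) (hz : z ∉ p) : s(x, z) ∉ T :=
  fun h => hz (hp.2.1 z ⟨x, hxz.symm, Sym2.eq_swap ▸ h⟩)

lemma IsDoubleTour.detour [DecidableEq X] {T : Finset (Sym2 X)} {p : List X}
    (hp : IsDoubleTour T p) {x z : X} (hx : x ∈ p) (hxz : x ≠ z) (hz : z ∉ p) :
    ∃ q, IsDoubleTour (insert s(x, z) T) q ∧ ∀ y ∈ p, y ∈ q := by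
  have hnew := hp.notMem hxz hz
  obtain ⟨hchain, hcover, hlen⟩ := hp
  obtain ⟨l₁, l₂, rfl⟩ := List.append_of_mem hx
  have hsub : ∀ y ∈ l₁ ++ x :: l₂, y ∈ l₁ ++ x :: z :: x :: l₂ := by
    simp only [List.mem_append, List.mem_cons]
    tauto
  refine ⟨l₁ ++ x :: z :: x :: l₂, ⟨?_, ?_, ?_⟩, hsub⟩
  · rw [List.isChain_append] at hchain ⊢
    obtain ⟨h₁, h₂, h₁₂⟩ := hchain
    refine ⟨h₁, List.isChain_cons_cons.2 ⟨hxz, List.isChain_cons_cons.2 ⟨hxz.symm, h₂⟩⟩, ?_⟩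
    simpa using h₁₂
  · rintro y ⟨w, hyw, hyw'⟩
    rcases Finset.mem_insert.1 hyw' with he | he
    · rcases Sym2.eq_iff.1 he with ⟨rfl, -⟩ | ⟨rfl, -⟩ <;> simp
    · exact hsub y (hcover y ⟨w, hyw, he⟩)
  · rw [pathLength_detour, edgeCost_insert hnew]
    linarith

lemma IsDoubleTour.extend [DecidableEq X] {E T : Finset (Sym2 X)} {p : List X} {r : X}
    (hconn : ∀ x ∈ edgeSupport E, ∀ y ∈ edgeSupport E, (edgeGraph E).Reachable x y)
    (hr : r ∈ edgeSupport E) (hTE : T ⊆ E) (hrp : r ∈ p) (hp : IsDoubleTour T p) :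
    ∃ q, IsDoubleTour E q := by
  by_cases hcover : ∀ y ∈ edgeSupport E, y ∈ p
  · exact ⟨p, hp.1, hcover, hp.2.2.trans (by linarith [edgeCost_mono hTE])⟩
  push Not at hcover
  obtain ⟨y, hy, hyp⟩ := hcover
  obtain ⟨w⟩ := hconn r hr y hy
  obtain ⟨d, -, hdp, hdp'⟩ := w.exists_boundary_dart {x | x ∈ p} hrp hyp
  obtain ⟨hne, hdE⟩ := d.adj
  have hnew := hp.notMem hne hdp'
  obtain ⟨q, hq, hpq⟩ := hp.detour hdp hne hdp'
  exact hq.extend hconn hr (Finset.insert_subset hdE hTE) (hpq r hrp)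
termination_by E.card - T.card
decreasing_by
  have := Finset.card_lt_card (Finset.ssubset_insert hnew)
  have := Finset.card_le_card (Finset.insert_subset hdE hTE)
  omega

lemma exists_isDoubleTour [DecidableEq X] {E : Finset (Sym2 X)}
    (hconn : ∀ x ∈ edgeSupport E, ∀ y ∈ edgeSupport E, (edgeGraph E).Reachable x y)
    {r : X} (hr : r ∈ edgeSupport E) : ∃ p, IsDoubleTour E p :=
  (isDoubleTour_empty r).extend hconn hr (Finset.empty_subset E) (List.mem_singleton_self r)

end Tour

section PathEdges

def pathEdges (p : List X) : List (Sym2 X) :=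
  List.zipWith (fun a b => s(a, b)) p p.tail

lemma pathEdges_cons_cons (a b : X) (l : List X) :
    pathEdges (a :: b :: l) = s(a, b) :: pathEdges (b :: l) := rfl

lemma mem_of_mem_pathEdges {p : List X} {x y : X} (h : s(x, y) ∈ pathEdges p) : x ∈ p := by
  induction p with
  | nil => simp [pathEdges] at h
  | cons a t ih =>
    cases t with
    | nil => simp [pathEdges] at h
    | cons b l =>
      rw [pathEdges_cons_cons, List.mem_cons] at h
      rcases h with h | h
      · rcases Sym2.eq_iff.1 h with ⟨rfl, -⟩ | ⟨rfl, -⟩ <;> simp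
      · exact List.mem_cons_of_mem a (ih h)

lemma not_isDiag_of_mem_pathEdges {p : List X} (hp : p.IsChain (· ≠ ·)) {e : Sym2 X}
    (he : e ∈ pathEdges p) : ¬ e.IsDiag := by
  induction p with
  | nil => simp [pathEdges] at he
  | cons a t ih =>
    cases t with
    | nil => simp [pathEdges] at he
    | cons b l =>
      rw [List.isChain_cons_cons] at hp
      rw [pathEdges_cons_cons, List.mem_cons] at he
      rcases he with rfl | he
      · exact Sym2.mk_isDiag_iff.not.2 hp.1
      · exact ih hp.2 he

lemma isChain_adj_pathEdges [DecidableEq X] {p : List X} (hp : p.IsChain (· ≠ ·)) :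
    p.IsChain (edgeGraph (pathEdges p).toFinset).Adj := by
  induction p with
  | nil => exact List.isChain_nil
  | cons a t ih =>
    cases t with
    | nil => exact List.isChain_singleton a
    | cons b l =>
      rw [List.isChain_cons_cons] at hp ⊢
      refine ⟨⟨hp.1, by simp [pathEdges_cons_cons]⟩, (ih hp.2).imp fun _ _ h => ?_⟩
      refine edgeGraph_mono (fun e he => ?_) h
      simp_all [pathEdges_cons_cons]

lemma isSteinerSubgraph_pathEdges [DecidableEq X] {k : ℕ} {g : Fin k → Set X} {p : List X}
    (hp : p.IsChain (· ≠ ·)) {u v : X} (hu : u ∈ p) (hv : v ∈ p) (huv : u ≠ v)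
    (hg : ∀ j, ∃ x ∈ p, x ∈ g j) : IsSteinerSubgraph (pathEdges p).toFinset g := by
  have hreach : ∀ x ∈ p, ∀ y ∈ p, (edgeGraph (pathEdges p).toFinset).Reachable x y :=
    fun _ hx _ hy => SimpleGraph.reachable_of_isChain_adj (isChain_adj_pathEdges hp) hx hy
  have hsupp : ∀ x ∈ p, x ∈ edgeSupport (pathEdges p).toFinset := by
    intro x hx
    by_cases hxu : x = u
    · subst hxu
      exact (hreach x hx v hv).exists_adj huv
    · exact (hreach x hx u hu).exists_adj hxu
  refine ⟨fun e he => not_isDiag_of_mem_pathEdges hp (List.mem_toFinset.1 he), ?_, ?_⟩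
  · rintro x ⟨_, -, hx⟩ y ⟨_, -, hy⟩
    exact hreach x (mem_of_mem_pathEdges (List.mem_toFinset.1 hx))
      y (mem_of_mem_pathEdges (List.mem_toFinset.1 hy))
  · intro j
    obtain ⟨x, hx, hxg⟩ := hg j
    exact ⟨x, hsupp x hx, hxg⟩

lemma edgeCost_pathEdges_le [MetricSpace X] [DecidableEq X] (p : List X) :
    edgeCost (pathEdges p).toFinset ≤ pathLength p := by
  refine (edgeCost_toFinset_le _).trans_eq ?_
  simp only [pathEdges, pathLength, List.map_zipWith, Sym2.lift_mk]

end PathEdges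

end

theorem steiner_lift_general
    {N M : Type*} [MetricSpace N] [MetricSpace M]
    (f : N → M) (α : ℝ)
    (hpd : PathDistortionLE f α)
    (k : ℕ) (g : Fin k → Set M)
    (E : Finset (Sym2 M))
    (hE : IsSteinerSubgraph E g) :
    ∃ E' : Finset (Sym2 N),
      IsSteinerSubgraph E' (fun j => f ⁻¹' (g j)) ∧
      edgeCost E' ≤ 2 * α * edgeCost E := by
  classical
  rcases E.eq_empty_or_nonempty with rfl | ⟨e, he⟩
  · exact ⟨∅, isSteinerSubgraph_empty_iff.2 (isSteinerSubgraph_empty_iff.1 hE), by simp [edgeCost]⟩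
  obtain ⟨hdiag, hconn, hgroups⟩ := hE
  obtain ⟨⟨a, b⟩, rfl⟩ := Sym2.mk_surjective e
  have hab : a ≠ b := fun h => hdiag _ he (Sym2.mk_isDiag_iff.2 h)
  obtain ⟨p, hp, hcover, hlen⟩ := exists_isDoubleTour hconn (⟨b, hab, he⟩ : a ∈ edgeSupport E)
  obtain ⟨p', hmap, hlen'⟩ := hpd p
  have hlift : ∀ x ∈ edgeSupport E, ∃ u ∈ p', f u = x :=
    fun x hx => List.mem_map.1 (hmap ▸ hcover x hx)
  have hp' : p'.IsChain (· ≠ ·) :=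
    ((List.isChain_map f).1 (hmap ▸ hp)).imp fun _ _ h he => h (congrArg f he)
  obtain ⟨u, hu, rfl⟩ := hlift a ⟨b, hab, he⟩
  obtain ⟨v, hv, rfl⟩ := hlift b ⟨f u, hab.symm, Sym2.eq_swap ▸ he⟩
  refine ⟨(pathEdges p').toFinset, isSteinerSubgraph_pathEdges hp' hu hv (ne_of_apply_ne f hab)
    fun j => ?_, ?_⟩
  · obtain ⟨x, hx, hxg⟩ := hgroups j
    obtain ⟨w, hw, rfl⟩ := hlift x hx
    exact ⟨w, hw, hxg⟩
  calc edgeCost (pathEdges p').toFinset ≤ pathLength p' := edgeCost_pathEdges_le p'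
    _ ≤ α * pathLength p := hlen'
    _ ≤ α * (2 * edgeCost E) := mul_le_mul_of_nonneg_left hlen (hpd.nonneg hab)
    _ = 2 * α * edgeCost E := by ring

/-- Lifting a Steiner tree along a surjective non-contractive multi-embedding `f : N → M`
of path distortion at most `α`: every Steiner subgraph `E` in the finite metric space `M`
for the groups `g_1,…,g_k` whose graph is a tree (connected and acyclic on its support)
admits a Steiner subgraph `E'` in `N` for the groups `f⁻¹(g_1),…,f⁻¹(g_k)` with
`cost(E') ≤ 2α·cost(E)`. -/
theorem steiner_lift
    {N M : Type*} [MetricSpace N] [MetricSpace M] [Fintype M]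
    (f : N → M) (α : ℝ)
    (hsurj : Function.Surjective f)
    (hnc : NonContractive f)
    (hpd : PathDistortionLE f α)
    (k : ℕ) (g : Fin k → Set M)
    (E : Finset (Sym2 M))
    (hE : IsSteinerSubgraph E g)
    (htree : (edgeGraph E).IsAcyclic) :
    ∃ E' : Finset (Sym2 N),
      IsSteinerSubgraph E' (fun j => f ⁻¹' (g j)) ∧
      edgeCost E' ≤ 2 * α * edgeCost E :=
  steiner_lift_general f α hpd k g E hE
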